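/- Let C ⊆ Y be compact. Then there is a compact subset D ⊆ Y with C ⊆ D such that every J-bounded connected component of Y ∖ J·C is contained in J·D, and every connected component of Y ∖ J·D is J-unbounded. -/
import Mathlib


open Pointwise

/-- `U` is a connected component of the subspace `F` (of the ambient space `X`). -/
def IsComponentOf {X : Type*} [TopologicalSpace X] (F U : Set X) : Prop :=
  ∃ x ∈ F, U = connectedComponentIn F x

/-- For `A ⊆ Y`, `orbitUnion J A` is `J·A = ⋃_{j ∈ J} j • A`. -/
def orbitUnion (J : Type*) {Y : Type*} [SMul J Y] (A : Set Y) : Set Y :=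
  ⋃ j : J, j • A

/-- A subset of `Y` is `J`-bounded if it is contained in `J·D` for some compact `D ⊆ Y`. -/
def JBounded (J : Type*) {Y : Type*} [TopologicalSpace Y] [SMul J Y] (S : Set Y) : Prop :=
  ∃ D : Set Y, IsCompact D ∧ S ⊆ orbitUnion J D

section Aux

variable {Y : Type*} {J : Type*} [Group J] [MulAction J Y]

lemma mem_orbitUnion {A : Set Y} {y : Y} : y ∈ orbitUnion J A ↔ ∃ j : J, y ∈ j • A :=
  Set.mem_iUnion

lemma subset_orbitUnion (A : Set Y) : A ⊆ orbitUnion J A := fun y hy =>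
  mem_orbitUnion.2 ⟨1, by rwa [one_smul]⟩

lemma orbitUnion_mono {A B : Set Y} (h : A ⊆ B) : orbitUnion J A ⊆ orbitUnion J B := by
  intro y hy
  obtain ⟨j, hj⟩ := mem_orbitUnion.1 hy
  exact mem_orbitUnion.2 ⟨j, Set.smul_set_mono h hj⟩

lemma smul_mem_orbitUnion {A : Set Y} {y : Y} (j : J) (hy : y ∈ orbitUnion J A) :
    j • y ∈ orbitUnion J A := by
  obtain ⟨j', hj'⟩ := mem_orbitUnion.1 hy
  refine mem_orbitUnion.2 ⟨j * j', ?_⟩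
  rw [mul_smul]
  exact Set.smul_mem_smul_set hj'

lemma smul_orbitUnion (j : J) (A : Set Y) : j • orbitUnion J A = orbitUnion J A := by
  apply subset_antisymm
  · rintro y ⟨z, hz, rfl⟩
    exact smul_mem_orbitUnion j hz
  · intro y hy
    rw [Set.mem_smul_set_iff_inv_smul_mem]
    exact smul_mem_orbitUnion j⁻¹ hy

variable [TopologicalSpace Y]

lemma jbounded_smul {S : Set Y} (j : J) (h : JBounded J S) : JBounded J (j • S) := by
  obtain ⟨D, hD, hSD⟩ := h
  exact ⟨D, hD, by rw [← smul_orbitUnion j D]; exact Set.smul_set_mono hSD⟩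

/-- The orbit of a compact set under a properly discontinuous action is closed. -/
lemma isClosed_orbitUnion [LocallyCompactSpace Y] [T2Space Y]
    (hcont : ∀ j : J, Continuous fun y : Y => j • y)
    (hpd : ∀ K : Set Y, IsCompact K → {j : J | ((j • K) ∩ K).Nonempty}.Finite)
    {K : Set Y} (hK : IsCompact K) : IsClosed (orbitUnion J K) := by
  rw [← isOpen_compl_iff, isOpen_iff_mem_nhds]
  intro y hy
  obtain ⟨M, hMc, hMn⟩ := exists_compact_mem_nhds y
  set S := {j : J | ((j • (K ∪ M)) ∩ (K ∪ M)).Nonempty} with hS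
  have hfin : S.Finite := hpd _ (hK.union hMc)
  have hsmulc : ∀ j : J, IsCompact (j • K) := by
    intro j
    rw [← Set.image_smul]
    exact hK.image (hcont j)
  have hN : IsClosed (⋃ j ∈ S, j • K) :=
    hfin.isClosed_biUnion fun j _ => (hsmulc j).isClosed
  have hyN : y ∈ (⋃ j ∈ S, j • K)ᶜ := by
    intro hmem
    obtain ⟨j, _, hj⟩ := Set.mem_iUnion₂.1 hmem
    exact hy (mem_orbitUnion.2 ⟨j, hj⟩)
  have hnhds : interior M ∩ (⋃ j ∈ S, j • K)ᶜ ∈ nhds y :=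
    Filter.inter_mem (interior_mem_nhds.2 hMn) (hN.isOpen_compl.mem_nhds hyN)
  refine Filter.mem_of_superset hnhds ?_
  rintro z ⟨hzM, hzN⟩ hz
  obtain ⟨j, hj⟩ := mem_orbitUnion.1 hz
  by_cases hjS : j ∈ S
  · exact hzN (Set.mem_iUnion₂.2 ⟨j, hjS, hj⟩)
  · apply hjS
    exact ⟨z, Set.smul_set_mono Set.subset_union_left hj,
      Set.subset_union_right (interior_subset hzM)⟩

lemma smul_connectedComponentIn_subset [ContinuousConstSMul J Y] (j : J) {F : Set Y} {x : Y}
    (hx : x ∈ F) :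
    j • connectedComponentIn F x ⊆ connectedComponentIn (j • F) (j • x) := by
  rw [← Set.image_smul]
  refine (isPreconnected_connectedComponentIn.image _
    (continuous_const_smul j).continuousOn).subset_connectedComponentIn
    ⟨x, mem_connectedComponentIn hx, rfl⟩ ?_
  rw [Set.image_smul]
  exact Set.smul_set_mono (connectedComponentIn_subset F x)

lemma smul_connectedComponentIn [ContinuousConstSMul J Y] (j : J) {F : Set Y} {x : Y}
    (hx : x ∈ F) :
    j • connectedComponentIn F x = connectedComponentIn (j • F) (j • x) := by
  apply subset_antisymm (smul_connectedComponentIn_subset j hx)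
  have h2 := smul_connectedComponentIn_subset (J := J) j⁻¹ (Set.smul_mem_smul_set hx : j • x ∈ j • F)
  rw [inv_smul_smul, inv_smul_smul] at h2
  calc connectedComponentIn (j • F) (j • x)
      = j • (j⁻¹ • connectedComponentIn (j • F) (j • x)) := by rw [smul_inv_smul]
    _ ⊆ j • connectedComponentIn F x := Set.smul_set_mono h2

end Aux

/-- Let `Y` be a connected, locally compact, locally connected, Hausdorff space, and let the
group `J` act on `Y` by homeomorphisms, freely and properly discontinuously.  If `C ⊆ Y` is
compact, then there is a compact `D ⊆ Y` containing `C` such that every `J`-bounded connected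
component of `Y ∖ J·C` is contained in `J·D`, and every connected component of `Y ∖ J·D` is
`J`-unbounded. -/
theorem stmt8 {Y : Type*} [TopologicalSpace Y] [ConnectedSpace Y]
    [LocallyCompactSpace Y] [LocallyConnectedSpace Y] [T2Space Y]
    {J : Type*} [Group J] [MulAction J Y]
    (hcont : ∀ j : J, Continuous fun y : Y => j • y)
    (hfree : ∀ (j : J) (y : Y), j • y = y → j = 1)
    (hpd : ∀ K : Set Y, IsCompact K → {j : J | ((j • K) ∩ K).Nonempty}.Finite)
    (C : Set Y) (hC : IsCompact C) :
    ∃ D : Set Y, IsCompact D ∧ C ⊆ D ∧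
      (∀ U : Set Y, IsComponentOf (orbitUnion J C)ᶜ U → JBounded J U → U ⊆ orbitUnion J D) ∧
      (∀ U : Set Y, IsComponentOf (orbitUnion J D)ᶜ U → ¬ JBounded J U) := by
  classical
  haveI : ContinuousConstSMul J Y := ⟨hcont⟩
  by_cases hCne : C.Nonempty
  swap
  · -- the degenerate case `C = ∅`
    rw [Set.not_nonempty_iff_eq_empty] at hCne
    subst hCne
    have hJC : orbitUnion J (∅ : Set Y) = ∅ := by
      simp [orbitUnion]
    by_cases hYb : JBounded J (Set.univ : Set Y)
    · obtain ⟨D₀, hD₀c, hD₀⟩ := hYb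
      refine ⟨D₀, hD₀c, Set.empty_subset D₀, ?_, ?_⟩
      · exact fun U _ _ u _ => hD₀ (Set.mem_univ u)
      · rintro U ⟨x, hx, -⟩ -
        exact hx (hD₀ (Set.mem_univ x))
    · have huniv : ∀ x : Y, connectedComponentIn (orbitUnion J (∅ : Set Y))ᶜ x = Set.univ := by
        intro x
        rw [hJC, Set.compl_empty, connectedComponentIn_univ,
          PreconnectedSpace.connectedComponent_eq_univ]
      refine ⟨∅, isCompact_empty, le_rfl, ?_, ?_⟩
      · rintro U ⟨x, hx, rfl⟩ hUb
        rw [huniv x] at hUb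
        exact absurd hUb hYb
      · rintro U ⟨x, hx, rfl⟩ hUb
        rw [huniv x] at hUb
        exact hYb hUb
  -- main case: C nonempty
  obtain ⟨c₀, hc₀⟩ := hCne
  have hJCcl : IsClosed (orbitUnion J C) := isClosed_orbitUnion hcont hpd hC
  set O := (orbitUnion J C)ᶜ with hOdef
  have hOopen : IsOpen O := hJCcl.isOpen_compl
  have hOinv : ∀ j : J, j • O = O := by
    intro j
    rw [hOdef, Set.smul_set_compl, smul_orbitUnion]
  have hcompopen : ∀ x : Y, IsOpen (connectedComponentIn O x) := fun x =>
    hOopen.connectedComponentIn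
  have htrans : ∀ (j : J) (x : Y), x ∈ O →
      j • connectedComponentIn O x = connectedComponentIn O (j • x) := by
    intro j x hx
    rw [smul_connectedComponentIn j hx, hOinv]
  -- closure of a component only meets `O` inside the component
  have hclcomp : ∀ x z : Y, z ∈ closure (connectedComponentIn O x) → z ∈ O →
      z ∈ connectedComponentIn O x := by
    intro x z hz hzO
    have hmeet : (connectedComponentIn O z ∩ connectedComponentIn O x).Nonempty := by
      rw [mem_closure_iff] at hz
      exact hz _ (hcompopen z) (mem_connectedComponentIn hzO)
    obtain ⟨w, hw1, hw2⟩ := hmeet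
    rw [connectedComponentIn_eq hw2, ← connectedComponentIn_eq hw1]
    exact mem_connectedComponentIn hzO
  -- a compact neighborhood of C
  obtain ⟨L, hLc, hCL⟩ := exists_compact_superset hC
  set W := orbitUnion J (interior L) with hWdef
  have hWopen : IsOpen W := isOpen_iUnion fun j => isOpen_interior.smul j
  have hJCW : orbitUnion J C ⊆ W := orbitUnion_mono hCL
  have hWJL : W ⊆ orbitUnion J L := orbitUnion_mono interior_subset
  have hJLcl : IsClosed (orbitUnion J L) := isClosed_orbitUnion hcont hpd hLc
  have hfrc : IsCompact (frontier L) :=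
    hLc.of_isClosed_subset isClosed_frontier
      (hLc.isClosed.frontier_eq ▸ Set.diff_subset)
  -- finite subcover of the frontier of L
  set f : Y → Set Y := fun x => if x ∈ O then connectedComponentIn O x else W with hfdef
  have hfopen : ∀ x ∈ frontier L, IsOpen (f x) := by
    intro x _
    by_cases hx : x ∈ O <;> simp only [hfdef, hx, if_true, if_false]
    · exact hcompopen x
    · exact hWopen
  have hcover : frontier L ⊆ ⋃ x ∈ frontier L, f x := by
    intro x hx
    refine Set.mem_biUnion hx ?_
    by_cases hxO : x ∈ O <;> simp only [hfdef, hxO, if_true, if_false]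
    · exact mem_connectedComponentIn hxO
    · exact hJCW (not_not.1 hxO)
  obtain ⟨T, hTsub, hTfin, hTcov⟩ := hfrc.elim_finite_subcover_image hfopen hcover
  -- choice of bounding compacta for the (boundeed) components through T
  set g : Y → Set Y := fun x =>
    if h : JBounded J (connectedComponentIn O x) then h.choose else ∅ with hgdef
  have hgc : ∀ x : Y, IsCompact (g x) := by
    intro x
    by_cases h : JBounded J (connectedComponentIn O x)
    · rw [hgdef]; simp only [dif_pos h]; exact h.choose_spec.1
    · rw [hgdef]; simp only [dif_neg h]; exact isCompact_empty
  have hgs : ∀ x : Y, JBounded J (connectedComponentIn O x) →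
      connectedComponentIn O x ⊆ orbitUnion J (g x) := by
    intro x h
    rw [hgdef]; simp only [dif_pos h]; exact h.choose_spec.2
  set D₀ : Set Y := (C ∪ L) ∪ ⋃ x ∈ T, g x with hD₀def
  have hD₀c : IsCompact D₀ :=
    (hC.union hLc).union (hTfin.isCompact_biUnion fun x _ => hgc x)
  have hCD₀ : C ⊆ D₀ := fun c hc => Set.mem_union_left _ (Set.mem_union_left _ hc)
  have hLD₀ : L ⊆ D₀ := fun l hl => Set.mem_union_left _ (Set.mem_union_right _ hl)
  -- the saturated set E
  set E : Set Y :=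
    orbitUnion J C ∪ {y | y ∈ O ∧ JBounded J (connectedComponentIn O y)} with hEdef
  have hEinv : ∀ (j : J) (y : Y), y ∈ E → j • y ∈ E := by
    rintro j y (hy | ⟨hyO, hyb⟩)
    · exact Or.inl (smul_mem_orbitUnion j hy)
    · refine Or.inr ⟨?_, ?_⟩
      · rw [← hOinv j]
        exact Set.smul_mem_smul_set hyO
      · rw [← htrans j y hyO]
        exact jbounded_smul j hyb
  -- Claim A : E is J-bounded by D₀
  have hEb : E ⊆ orbitUnion J D₀ := by
    rintro y (hy | ⟨hyO, hyb⟩)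
    · exact orbitUnion_mono hCD₀ hy
    · set V := connectedComponentIn O y with hVdef
      have hyV : y ∈ V := mem_connectedComponentIn hyO
      have hVO : V ⊆ O := connectedComponentIn_subset O y
      by_cases hVL : V ⊆ orbitUnion J L
      · exact orbitUnion_mono hLD₀ (hVL hyV)
      · by_cases hVJL : (V ∩ orbitUnion J L).Nonempty
        · -- V meets the frontier of J·L
          have hVfr : (V ∩ frontier (orbitUnion J L)).Nonempty := by
            by_contra hcon
            rw [Set.not_nonempty_iff_eq_empty] at hcon
            have hfr_eq : frontier (orbitUnion J L) =
                orbitUnion J L \ interior (orbitUnion J L) := hJLcl.frontier_eq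
            have hsub : V ⊆ interior (orbitUnion J L) ∪ (orbitUnion J L)ᶜ := by
              intro z hz
              by_cases hzL : z ∈ orbitUnion J L
              · left
                by_contra hzi
                exact Set.eq_empty_iff_forall_notMem.1 hcon z
                  ⟨hz, hfr_eq ▸ ⟨hzL, hzi⟩⟩
              · exact Or.inr hzL
            obtain ⟨z₁, hz₁V, hz₁L⟩ := hVJL
            have hz₁i : z₁ ∈ interior (orbitUnion J L) := by
              rcases hsub hz₁V with h | h
              · exact h
              · exact absurd hz₁L h
            obtain ⟨z₂, hz₂V, hz₂L⟩ := Set.not_subset.1 hVL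
            have hpc : IsPreconnected V := isPreconnected_connectedComponentIn
            obtain ⟨z, _, hzi, hzc⟩ := hpc _ _ isOpen_interior hJLcl.isOpen_compl hsub
              ⟨z₁, hz₁V, hz₁i⟩ ⟨z₂, hz₂V, hz₂L⟩
            exact hzc (interior_subset hzi)
          obtain ⟨z, hzV, hzfr⟩ := hVfr
          rw [hJLcl.frontier_eq] at hzfr
          obtain ⟨hzJL, hzNI⟩ := hzfr
          obtain ⟨j, hj⟩ := mem_orbitUnion.1 hzJL
          obtain ⟨w, hwL, hwz⟩ := hj
          -- w is not in W
          have hwW : w ∉ W := by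
            rintro ⟨s, hs⟩
            obtain ⟨j', rfl⟩ : ∃ j' : J, s = j' • interior L := by
              obtain ⟨j', hj'⟩ := Set.mem_range.1 hs.1
              exact ⟨j', hj'.symm⟩
            apply hzNI
            have : z ∈ (j * j') • interior L := by
              rw [mul_smul, ← hwz]
              exact Set.smul_mem_smul_set hs.2
            exact interior_maximal
              (fun u hu => mem_orbitUnion.2 ⟨j * j', Set.smul_set_mono interior_subset hu⟩)
              (isOpen_interior.smul (j * j')) this
          have hwO : w ∈ O := fun h => hwW (hJCW (not_not.1 (fun hh => hh h)))
          have hwfr : w ∈ frontier L := by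
            rw [hLc.isClosed.frontier_eq]
            refine ⟨hwL, fun hwi => hwW ?_⟩
            exact subset_orbitUnion _ hwi
          obtain ⟨x, hxT, hwfx⟩ := Set.mem_iUnion₂.1 (hTcov hwfr)
          have hxO : x ∈ O := by
            by_contra hxO
            rw [hfdef] at hwfx
            simp only [hxO, if_false] at hwfx
            exact hwW hwfx
          rw [hfdef] at hwfx
          simp only [hxO, if_true] at hwfx
          -- components coincide
          have h1 : connectedComponentIn O x = connectedComponentIn O w :=
            connectedComponentIn_eq hwfx
          have hzO : z ∈ O := hVO hzV
          have hwzeq : w = j⁻¹ • z := by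
            rw [← hwz]; simp
          have h2 : connectedComponentIn O w = j⁻¹ • V := by
            have hVz : V = connectedComponentIn O z := connectedComponentIn_eq hzV
            rw [hVz, htrans j⁻¹ z hzO, ← hwzeq]
          have hxb : JBounded J (connectedComponentIn O x) := by
            rw [h1, h2]
            exact jbounded_smul j⁻¹ hyb
          have hVsub : V ⊆ orbitUnion J (g x) := by
            have h3 := hgs x hxb
            have hVeq : V = j • connectedComponentIn O x := by
              rw [h1, h2, smul_inv_smul]
            rw [hVeq]
            refine (Set.smul_set_mono h3).trans ?_
            rw [smul_orbitUnion]
          refine orbitUnion_mono ?_ (hVsub hyV)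
          exact fun u hu => Set.mem_union_right _ (Set.mem_biUnion hxT hu)
        · -- V misses J·L entirely : V is clopen, contradiction
          exfalso
          rw [Set.not_nonempty_iff_eq_empty] at hVJL
          have hVcl : IsClosed V := by
            rw [← closure_subset_iff_isClosed]
            intro z hz
            by_cases hzO : z ∈ O
            · exact hclcomp y z hz hzO
            · exfalso
              have hzW : z ∈ W := hJCW (not_not.1 hzO)
              rw [mem_closure_iff] at hz
              obtain ⟨u, huW, huV⟩ := hz W hWopen hzW
              exact Set.eq_empty_iff_forall_notMem.1 hVJL u ⟨huV, hWJL huW⟩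
          have hVuniv : V = Set.univ :=
            IsClopen.eq_univ ⟨hVcl, hcompopen y⟩ ⟨y, hyV⟩
          have : c₀ ∈ V := hVuniv ▸ Set.mem_univ c₀
          exact hVO this (subset_orbitUnion C hc₀)
  -- Claim B : E is closed
  have hEcl : IsClosed E := by
    rw [← closure_subset_iff_isClosed]
    intro z hz
    by_contra hzE
    have hzO : z ∈ O := by
      intro hzc
      exact hzE (Or.inl (not_not.1 (fun hh => hh hzc)))
    have hzb : ¬ JBounded J (connectedComponentIn O z) := fun hb => hzE (Or.inr ⟨hzO, hb⟩)
    rw [mem_closure_iff] at hz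
    obtain ⟨e, heC, heE⟩ := hz _ (hcompopen z) (mem_connectedComponentIn hzO)
    have heO : e ∈ O := connectedComponentIn_subset O z heC
    rcases heE with he | ⟨_, heb⟩
    · exact heO he
    · rw [← connectedComponentIn_eq heC] at heb
      exact hzb heb
  -- the desired compact set
  set D : Set Y := E ∩ D₀ with hDdef
  have hJD : orbitUnion J D = E := by
    apply subset_antisymm
    · intro y hy
      obtain ⟨j, z, hz, rfl⟩ := mem_orbitUnion.1 hy
      exact hEinv j z hz.1
    · intro y hy
      obtain ⟨j, d, hd, rfl⟩ := mem_orbitUnion.1 (hEb hy)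
      refine mem_orbitUnion.2 ⟨j, Set.smul_mem_smul_set ⟨?_, hd⟩⟩
      have := hEinv j⁻¹ _ hy
      rwa [inv_smul_smul] at this
  refine ⟨D, hD₀c.inter_left hEcl, fun c hc => ⟨Or.inl (subset_orbitUnion C hc), hCD₀ hc⟩, ?_, ?_⟩
  · -- part 1
    rintro U ⟨x, hxO, rfl⟩ hUb
    rw [hJD]
    intro u hu
    have huO : u ∈ O := connectedComponentIn_subset O x hu
    refine Or.inr ⟨huO, ?_⟩
    rwa [← connectedComponentIn_eq hu]
  · -- part 2
    rintro U ⟨x, hx, rfl⟩ hUb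
    rw [hJD] at hx
    have hxO : x ∈ O := fun hc => hx (Or.inl hc)
    have hxub : ¬ JBounded J (connectedComponentIn O x) := fun hb => hx (Or.inr ⟨hxO, hb⟩)
    set V := connectedComponentIn O x with hVdef
    have hVE : V ⊆ Eᶜ := by
      intro w hwV
      have hwO : w ∈ O := connectedComponentIn_subset O x hwV
      rintro (hw | ⟨_, hwb⟩)
      · exact hwO hw
      · rw [← connectedComponentIn_eq hwV] at hwb
        exact hxub hwb
    have hVU : V ⊆ connectedComponentIn (orbitUnion J D)ᶜ x := by
      rw [hJD]
      exact isPreconnected_connectedComponentIn.subset_connectedComponentIn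
        (mem_connectedComponentIn hxO) hVE
    obtain ⟨D', hD'c, hD'⟩ := hUb
    exact hxub ⟨D', hD'c, fun v hv => hD' (hVU hv)⟩
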